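/- Let E ⊂ ℝ^N be compact with projection π(E) ⊂ ℝ^{N-1}. Suppose π(E) is a Markov set with constants A, η (i.e., ‖D^γ G‖_{π(E)} ≤ A(deg G)^{η|γ|}‖G‖_{π(E)} for all polynomials G in N−1 variables) and suppose there exist B, λ > 0 such that for every polynomial P = ∑_{i=0}^{d-1} G_i(y) x_k^i one has ‖G_i‖_{π(E)} ≤ B (deg P)^λ ‖P‖_E for all i. Then E is a 𝒫(y)⊗𝒫_{d-1}(x_k)-Markov set; concretely, there is K > 0 depending only on E and d with ‖∂P/∂x_j‖_E ≤ Kd(AB(deg P)^{η+λ} + B(deg P)^λ)‖P‖_E for all j. -/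

import Mathlib

/-- Partial derivative in direction `i` of a function on `ℝ^N`. -/
noncomputable def pd {N : ℕ} (i : Fin N) (f : (Fin N → ℝ) → ℝ) : (Fin N → ℝ) → ℝ :=
  fun x => fderiv ℝ f x (Pi.single i 1)

/-- Iterated partial derivative `D^γ` for a multi-index `γ`. -/
noncomputable def mderiv {N : ℕ} (γ : Fin N → ℕ) (f : (Fin N → ℝ) → ℝ) : (Fin N → ℝ) → ℝ :=
  (List.finRange N).foldr (fun i g => (pd i)^[γ i] g) f

/-- The polynomial function `P(z) = ∑_{i=0}^{d-1} G_i(y) x_k^i`. -/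
noncomputable def Pfun {n d : ℕ} (k : Fin (n + 1)) (G : Fin d → MvPolynomial (Fin n) ℝ) :
    (Fin (n + 1) → ℝ) → ℝ :=
  fun z => ∑ i : Fin d, MvPolynomial.eval (fun j => z (k.succAbove j)) (G i) * z k ^ (i : ℕ)

/-- `deg P = max_i (deg G_i + i)`. -/
def degP {n d : ℕ} (G : Fin d → MvPolynomial (Fin n) ℝ) : ℕ :=
  Finset.univ.sup fun i : Fin d => (G i).totalDegree + (i : ℕ)

/-- The projection of `E` forgetting the `k`-th coordinate. -/
def projE {n : ℕ} (k : Fin (n + 1)) (E : Set (Fin (n + 1) → ℝ)) : Set (Fin n → ℝ) :=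
  (fun z (j : Fin n) => z (k.succAbove j)) '' E

/-!
Write `P = ∑ G_i(y) x_k^i`. Then `∂P/∂x_k = ∑ i G_i(y) x_k^{i-1}` and `∂P/∂y_j = ∑ x_k^i ∂G_i/∂y_j`.
The coefficient bound controls `G_i` on `π(E)` by `B (deg P)^λ ‖P‖_E`, and the Markov inequality
of `π(E)` then controls `∂G_i/∂y_j` by `A (deg G_i)^η ≤ A (deg P)^η` times that. The remaining
factors `x_k^i` and `i x_k^{i-1}` are bounded on the compact set `E` by `K = (d + 1) M^d`, where
`M = max(1, sup_E |x_k|)`, and summing the `d` terms gives the factor `d`.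
-/

open MvPolynomial

theorem foldr_iterate_single_of_nodup {ι α : Type*} [DecidableEq ι] (φ : ι → α → α) (j : ι)
    (f : α) {l : List ι} (hl : l.Nodup) :
    l.foldr (fun i g => (φ i)^[(Pi.single j 1 : ι → ℕ) i] g) f = if j ∈ l then φ j f else f := by
  induction l with
  | nil => simp
  | cons a t ih =>
    rw [List.nodup_cons] at hl
    rcases eq_or_ne a j with rfl | hne
    · simp [ih hl.2, hl.1]
    · simp [ih hl.2, hne, hne.symm]

theorem mderiv_single {N : ℕ} (j : Fin N) (f : (Fin N → ℝ) → ℝ) :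
    mderiv (Pi.single j 1) f = pd j f := by
  rw [mderiv, foldr_iterate_single_of_nodup _ j f (List.nodup_finRange N),
    if_pos (List.mem_finRange j)]

theorem MvPolynomial.differentiable_eval {𝕜 σ : Type*} [NontriviallyNormedField 𝕜]
    [CompleteSpace 𝕜] [Fintype σ] (p : MvPolynomial σ 𝕜) :
    Differentiable 𝕜 (fun w : σ → 𝕜 => eval w p) :=
  fun w => (AnalyticOnNhd.eval_mvPolynomial p w trivial).differentiableAt

-- The map `z ↦ y` forgetting `x_k`, as in `Pfun` and `projE`.
noncomputable def removeNthCLM {n : ℕ} (k : Fin (n + 1)) : (Fin (n + 1) → ℝ) →L[ℝ] (Fin n → ℝ) :=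
  ContinuousLinearMap.pi fun j => ContinuousLinearMap.proj (k.succAbove j)

theorem removeNthCLM_single_self {n : ℕ} (k : Fin (n + 1)) :
    removeNthCLM k (Pi.single k 1) = 0 := by
  funext j
  simp [removeNthCLM]

theorem removeNthCLM_single_succAbove {n : ℕ} (k : Fin (n + 1)) (j : Fin n) :
    removeNthCLM k (Pi.single (k.succAbove j) 1) = Pi.single j 1 := by
  funext j'
  rcases eq_or_ne j' j with rfl | h
  · simp [removeNthCLM]
  · simp [removeNthCLM, h, Fin.succAbove_right_injective.ne h]

section Pfun

variable {n d : ℕ} (k : Fin (n + 1)) (G : Fin d → MvPolynomial (Fin n) ℝ) (z : Fin (n + 1) → ℝ)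

theorem hasFDerivAt_Pfun :
    HasFDerivAt (Pfun k G)
      (∑ i : Fin d,
        (eval (removeNthCLM k z) (G i) • (((i : ℕ) * z k ^ ((i : ℕ) - 1)) •
            (ContinuousLinearMap.proj k : (Fin (n + 1) → ℝ) →L[ℝ] ℝ))
          + z k ^ (i : ℕ) • (fderiv ℝ (fun w => eval w (G i)) (removeNthCLM k z)).comp
            (removeNthCLM k))) z := by
  refine HasFDerivAt.fun_sum fun i _ => HasFDerivAt.mul ?_ ?_
  · exact (MvPolynomial.differentiable_eval (G i) _).hasFDerivAt.comp z
      (removeNthCLM k).hasFDerivAt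
  · exact (hasDerivAt_pow (i : ℕ) (z k)).comp_hasFDerivAt z
      (ContinuousLinearMap.proj k : (Fin (n + 1) → ℝ) →L[ℝ] ℝ).hasFDerivAt

theorem pd_self_Pfun :
    pd k (Pfun k G) z
      = ∑ i : Fin d, eval (removeNthCLM k z) (G i) * ((i : ℕ) * z k ^ ((i : ℕ) - 1)) := by
  rw [pd, (hasFDerivAt_Pfun k G z).fderiv]
  simp [removeNthCLM_single_self]

theorem pd_succAbove_Pfun (j : Fin n) :
    pd (k.succAbove j) (Pfun k G) z
      = ∑ i : Fin d, z k ^ (i : ℕ) * pd j (fun w => eval w (G i)) (removeNthCLM k z) := by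
  rw [pd, (hasFDerivAt_Pfun k G z).fderiv]
  simp [removeNthCLM_single_succAbove, pd]

theorem totalDegree_le_degP (i : Fin d) : (G i).totalDegree ≤ degP G :=
  (Nat.le_add_right _ _).trans (Finset.le_sup (f := fun i => (G i).totalDegree + (i : ℕ))
    (Finset.mem_univ i))

end Pfun

theorem abs_sum_mul_le {d : ℕ} {a b : Fin d → ℝ} {α β : ℝ} (ha : ∀ i, |a i| ≤ α)
    (hb : ∀ i, |b i| ≤ β) : |∑ i, a i * b i| ≤ d * (α * β) := by
  calc |∑ i, a i * b i| ≤ ∑ i, |a i * b i| := Finset.abs_sum_le_sum_abs _ _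
    _ ≤ ∑ _i : Fin d, α * β := Finset.sum_le_sum fun i _ => by
        rw [abs_mul]
        exact mul_le_mul (ha i) (hb i) (abs_nonneg _) ((abs_nonneg _).trans (ha i))
    _ = d * (α * β) := by simp

section PowerBounds

variable {x M : ℝ} {i d : ℕ}

theorem abs_pow_le_pow_of_abs_le (hx : |x| ≤ M) (hM : 1 ≤ M) (hi : i ≤ d) : |x ^ i| ≤ M ^ d := by
  rw [abs_pow]
  exact (pow_le_pow_left₀ (abs_nonneg x) hx i).trans (pow_le_pow_right₀ hM hi)

theorem abs_pow_le_succ_mul_pow (hx : |x| ≤ M) (hM : 1 ≤ M) (hi : i ≤ d) :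
    |x ^ i| ≤ (d + 1) * M ^ d :=
  (abs_pow_le_pow_of_abs_le hx hM hi).trans
    (le_mul_of_one_le_left (by positivity) (by linarith [(d.cast_nonneg : (0 : ℝ) ≤ d)]))

theorem abs_mul_pow_pred_le_succ_mul_pow (hx : |x| ≤ M) (hM : 1 ≤ M) (hi : i < d) :
    |(i : ℝ) * x ^ (i - 1)| ≤ (d + 1) * M ^ d := by
  rw [abs_mul, Nat.abs_cast]
  exact mul_le_mul (by norm_cast; omega) (abs_pow_le_pow_of_abs_le hx hM (by omega))
    (abs_nonneg _) (by positivity)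

end PowerBounds

theorem abs_pd_eval_le_of_markov {n : ℕ} {S : Set (Fin n → ℝ)} {A η : ℝ}
    (hMarkov : ∀ G : MvPolynomial (Fin n) ℝ, ∀ γ : Fin n → ℕ, ∀ C : ℝ,
      (∀ y ∈ S, |eval y G| ≤ C) →
      ∀ y ∈ S, |mderiv γ (fun w => eval w G) y|
        ≤ A * ((G.totalDegree : ℝ)) ^ (η * ((∑ i, γ i : ℕ) : ℝ)) * C)
    (hA : 0 ≤ A) (hη : 0 ≤ η) {G : MvPolynomial (Fin n) ℝ} {D : ℕ} (hG : G.totalDegree ≤ D)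
    {c : ℝ} (hc : ∀ y ∈ S, |eval y G| ≤ c) (j : Fin n) {y : Fin n → ℝ} (hy : y ∈ S) :
    |pd j (fun w => eval w G) y| ≤ A * (D : ℝ) ^ η * c := by
  have h := hMarkov G (Pi.single j 1) c hc y hy
  simp only [mderiv_single, Finset.sum_pi_single', Finset.mem_univ, if_true, Nat.cast_one,
    mul_one] at h
  refine h.trans (mul_le_mul_of_nonneg_right (mul_le_mul_of_nonneg_left ?_ hA)
    ((abs_nonneg _).trans (hc y hy)))
  exact Real.rpow_le_rpow (Nat.cast_nonneg _) (by exact_mod_cast hG) hη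

theorem Markov_of_coefficient_bounds_general (n d : ℕ) (k : Fin (n + 1))
    (E : Set (Fin (n + 1) → ℝ)) (hE : IsCompact E)
    (A η : ℝ) (hA : 0 < A) (hη : 0 < η)
    (hMarkov : ∀ G : MvPolynomial (Fin n) ℝ, ∀ γ : Fin n → ℕ, ∀ C : ℝ,
      (∀ y ∈ projE k E, |MvPolynomial.eval y G| ≤ C) →
      ∀ y ∈ projE k E, |mderiv γ (fun w => MvPolynomial.eval w G) y|
        ≤ A * ((G.totalDegree : ℝ)) ^ (η * ((∑ i, γ i : ℕ) : ℝ)) * C)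
    (B lam : ℝ) (hB : 0 < B)
    (hcoef : ∀ G : Fin d → MvPolynomial (Fin n) ℝ, ∀ C : ℝ,
      (∀ z ∈ E, |Pfun k G z| ≤ C) →
      ∀ i : Fin d, ∀ y ∈ projE k E,
        |MvPolynomial.eval y (G i)| ≤ B * ((degP G : ℝ)) ^ lam * C) :
    ∃ K : ℝ, 0 < K ∧
      ∀ G : Fin d → MvPolynomial (Fin n) ℝ, ∀ j : Fin (n + 1), ∀ C : ℝ,
        (∀ z ∈ E, |Pfun k G z| ≤ C) →
        ∀ z ∈ E, |pd j (Pfun k G) z|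
          ≤ K * d * (A * B * ((degP G : ℝ)) ^ (η + lam) + B * ((degP G : ℝ)) ^ lam) * C := by
  obtain ⟨R, hR⟩ := hE.exists_bound_of_continuousOn (continuous_apply k).continuousOn
  set M := max R 1
  set K : ℝ := (d + 1) * M ^ d
  have hM : 1 ≤ M := le_max_right _ _
  refine ⟨K, by positivity, fun G j C hP z hz => ?_⟩
  set D : ℝ := (degP G : ℝ)
  have hy : removeNthCLM k z ∈ projE k E := ⟨z, hz, rfl⟩
  have hzk : |z k| ≤ M := (hR z hz).trans (le_max_left _ _)
  have hC : 0 ≤ C := (abs_nonneg _).trans (hP z hz)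
  have hG := hcoef G C hP
  rcases eq_or_ne j k with rfl | hjk
  · rw [pd_self_Pfun]
    calc _ ≤ d * (B * D ^ lam * C * K) := abs_sum_mul_le (fun i => hG i _ hy)
          (fun i => abs_mul_pow_pred_le_succ_mul_pow hzk hM i.isLt)
      _ ≤ K * d * (A * B * D ^ (η + lam) + B * D ^ lam) * C := by
        nlinarith [show 0 ≤ K * d * (A * B * D ^ (η + lam)) * C by positivity]
  · obtain ⟨j, rfl⟩ := Fin.exists_succAbove_eq hjk
    have hderiv (i : Fin d) :
        |pd j (fun w => eval w (G i)) (removeNthCLM k z)| ≤ A * B * D ^ (η + lam) * C :=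
      calc _ ≤ A * D ^ η * (B * D ^ lam * C) :=
            abs_pd_eval_le_of_markov hMarkov hA.le hη.le (totalDegree_le_degP G i) (hG i) j hy
        _ = A * B * (D ^ η * D ^ lam) * C := by ring
        _ ≤ A * B * D ^ (η + lam) * C := by
          gcongr
          exact Real.le_rpow_add (Nat.cast_nonneg _) η lam
    rw [pd_succAbove_Pfun]
    calc _ ≤ d * (K * (A * B * D ^ (η + lam) * C)) := abs_sum_mul_le
          (fun i => abs_pow_le_succ_mul_pow hzk hM i.isLt.le) hderiv
      _ ≤ K * d * (A * B * D ^ (η + lam) + B * D ^ lam) * C := by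
        nlinarith [show 0 ≤ K * d * (B * D ^ lam) * C by positivity]

/-- If `π(E)` is a Markov set (constants `A, η`) and the coefficients of every
`P = ∑_{i<d} G_i(y)x_k^i` satisfy `‖G_i‖_{π(E)} ≤ B (deg P)^λ ‖P‖_E`, then `E` is a
`𝒫(y)⊗𝒫_{d-1}(x_k)`-Markov set; concretely there is `K > 0` with
`‖∂P/∂x_j‖_E ≤ K d (A B (deg P)^{η+λ} + B (deg P)^λ) ‖P‖_E` for all `j`. -/
theorem Markov_of_coefficient_bounds (n d : ℕ) (hd : 1 ≤ d) (k : Fin (n + 1))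
    (E : Set (Fin (n + 1) → ℝ)) (hE : IsCompact E) (hEne : E.Nonempty)
    (A η : ℝ) (hA : 0 < A) (hη : 0 < η)
    (hMarkov : ∀ G : MvPolynomial (Fin n) ℝ, ∀ γ : Fin n → ℕ, ∀ C : ℝ,
      (∀ y ∈ projE k E, |MvPolynomial.eval y G| ≤ C) →
      ∀ y ∈ projE k E, |mderiv γ (fun w => MvPolynomial.eval w G) y|
        ≤ A * ((G.totalDegree : ℝ)) ^ (η * ((∑ i, γ i : ℕ) : ℝ)) * C)
    (B lam : ℝ) (hB : 0 < B) (hlam : 0 < lam)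
    (hcoef : ∀ G : Fin d → MvPolynomial (Fin n) ℝ, ∀ C : ℝ,
      (∀ z ∈ E, |Pfun k G z| ≤ C) →
      ∀ i : Fin d, ∀ y ∈ projE k E,
        |MvPolynomial.eval y (G i)| ≤ B * ((degP G : ℝ)) ^ lam * C) :
    ∃ K : ℝ, 0 < K ∧
      ∀ G : Fin d → MvPolynomial (Fin n) ℝ, ∀ j : Fin (n + 1), ∀ C : ℝ,
        (∀ z ∈ E, |Pfun k G z| ≤ C) →
        ∀ z ∈ E, |pd j (Pfun k G) z|
          ≤ K * d * (A * B * ((degP G : ℝ)) ^ (η + lam) + B * ((degP G : ℝ)) ^ lam) * C :=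
  Markov_of_coefficient_bounds_general n d k E hE A η hA hη hMarkov B lam hB hcoef
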